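/- Let n be even, let k = ⌊log₂ n⌋, and suppose n = 2j(k + 1) + r with 4 ≤ r < k + 1. Then γ(KG_n) > 2j + 1 = ⌈n/(⌊log₂ n⌋ + 1)⌉. -/

import Mathlib

/-!
In a dominating set `D` of the Knödel graph, let `a` and `b` count its odd and even vertices.
The graph is bipartite between the `n / 2` odd and the `n / 2` even residues and every vertex
has at most `k = ⌊log₂ n⌋` neighbours, so `n / 2 ≤ a + b k` and `n / 2 ≤ b + a k`. Since
`n / 2 = j (k + 1) + r / 2` with `r / 2 ≥ 2`, these two bounds cannot both hold when
`a + b ≤ 2j + 1`.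
-/

/-- The Knödel graph on `n` vertices (for even `n ≥ 6`): `x ~ y` iff
`x + y ≡ 2^t - 1 (mod n)` for some `1 ≤ t ≤ ⌊log₂ n⌋`. -/
def knodel (n : ℕ) : SimpleGraph (ZMod n) where
  Adj x y := x ≠ y ∧ ∃ t : ℕ, 1 ≤ t ∧ t ≤ Nat.log 2 n ∧ x + y = 2 ^ t - 1
  symm := by
    constructor
    rintro x y ⟨hxy, t, h1, h2, h3⟩
    exact ⟨hxy.symm, t, h1, h2, by rw [add_comm]; exact h3⟩
  loopless := ⟨fun x h => h.1 rfl⟩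

/-- The domination number of a finite graph. -/
noncomputable def dominationNumber {V : Type*} [Fintype V] (G : SimpleGraph V) : ℕ :=
  sInf {k | ∃ D : Finset V, (∀ v, v ∉ D → ∃ u ∈ D, G.Adj u v) ∧ D.card = k}

open Finset

namespace SimpleGraph

variable {V : Type*} {G : SimpleGraph V}

variable (G) in
def IsDominatingSet (D : Finset V) : Prop := ∀ v, v ∉ D → ∃ u ∈ D, G.Adj u v

/-- A vertex of the independent set `S` that is not in `D` is dominated from `D \ S`. -/
theorem IsDominatingSet.card_le [Fintype V] [DecidableEq V] [DecidableRel G.Adj]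
    {D S : Finset V} {Δ : ℕ} (hD : G.IsDominatingSet D) (hS : G.IsIndepSet (S : Set V))
    (hΔ : ∀ v, G.degree v ≤ Δ) : #S ≤ #(D ∩ S) + #(D \ S) * Δ := by
  have hcover : S ⊆ (D ∩ S) ∪ (D \ S).biUnion (G.neighborFinset ·) := by
    intro v hv
    by_cases hvD : v ∈ D
    · exact mem_union_left _ (mem_inter.2 ⟨hvD, hv⟩)
    obtain ⟨u, huD, huv⟩ := hD v hvD
    have huS : u ∉ S := fun huS => hS huS hv huv.ne huv
    exact mem_union_right _
      (mem_biUnion.2 ⟨u, mem_sdiff.2 ⟨huD, huS⟩, (G.mem_neighborFinset u v).2 huv⟩)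
  calc #S ≤ #(D ∩ S) + #((D \ S).biUnion (G.neighborFinset ·)) :=
        (card_le_card hcover).trans (card_union_le _ _)
    _ ≤ #(D ∩ S) + ∑ u ∈ D \ S, G.degree u := by
        gcongr
        exact card_biUnion_le
    _ ≤ #(D ∩ S) + #(D \ S) * Δ := by
        gcongr
        simpa using sum_le_card_nsmul _ _ _ fun u _ => hΔ u

theorem lt_dominationNumber [Fintype V] {m : ℕ} (h : ∀ D, G.IsDominatingSet D → m < #D) :
    m < dominationNumber G := by
  obtain ⟨D, hD, hcard⟩ :
      dominationNumber G ∈ {k | ∃ D : Finset V, G.IsDominatingSet D ∧ #D = k} :=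
    Nat.sInf_mem ⟨_, univ, fun v hv => absurd (mem_univ v) hv, rfl⟩
  exact hcard ▸ h D hD

end SimpleGraph

section Parity

variable {n : ℕ} (hn : 2 ∣ n)

def oddResidues [NeZero n] : Finset (ZMod n) := {v | ZMod.castHom hn (ZMod 2) v = 1}

theorem card_oddResidues [NeZero n] : #(oddResidues hn) = n / 2 := by
  have hshift : #(oddResidues hn) = #(oddResidues hn)ᶜ := by
    refine card_nbij' (· + 1) (· - 1) ?_ ?_ (fun _ _ => by simp) (fun _ _ => by simp)
    all_goals
      intro v hv
      simp only [oddResidues, coe_compl, coe_filter, mem_univ, true_and, Set.mem_compl_iff,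
        Set.mem_ofPred_eq, map_add, map_sub, map_one] at hv ⊢
      generalize ZMod.castHom hn (ZMod 2) v = c at hv ⊢
      revert c
      decide
  rw [card_compl, ZMod.card] at hshift
  omega

end Parity

section Knodel

variable {n : ℕ}

theorem knodel_degree_le [NeZero n] [DecidableRel (knodel n).Adj] (u : ZMod n) :
    (knodel n).degree u ≤ Nat.log 2 n := by
  have hsub : (knodel n).neighborFinset u ⊆
      (Icc 1 (Nat.log 2 n)).image fun t => (2 : ZMod n) ^ t - 1 - u := by
    intro v hv
    obtain ⟨-, t, ht, htk, huv⟩ := (knodel n).mem_neighborFinset u v |>.1 hv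
    exact mem_image.2 ⟨t, mem_Icc.2 ⟨ht, htk⟩, by rw [← huv]; ring⟩
  calc (knodel n).degree u ≤ #(Icc 1 (Nat.log 2 n)) := (card_le_card hsub).trans card_image_le
    _ = Nat.log 2 n := by simp

variable (hn : 2 ∣ n)
include hn

theorem knodel_castHom_add_of_adj {x y : ZMod n} (h : (knodel n).Adj x y) :
    ZMod.castHom hn (ZMod 2) x + ZMod.castHom hn (ZMod 2) y = 1 := by
  obtain ⟨-, t, ht, -, hxy⟩ := h
  obtain ⟨s, rfl⟩ : ∃ s, t = s + 1 := ⟨t - 1, by omega⟩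
  rw [← map_add, hxy, map_sub, map_pow, map_one, map_ofNat, pow_succ]
  simp only [show (2 : ZMod 2) = 0 from rfl, mul_zero]
  decide

variable [NeZero n]

theorem knodel_isIndepSet_oddResidues :
    (knodel n).IsIndepSet (oddResidues hn : Set (ZMod n)) := by
  intro u hu v hv _ huv
  have := knodel_castHom_add_of_adj hn huv
  simp only [oddResidues, coe_filter, mem_univ, true_and, Set.mem_ofPred_eq] at hu hv
  rw [hu, hv] at this
  exact absurd this (by decide)

theorem knodel_isIndepSet_compl_oddResidues :
    (knodel n).IsIndepSet ((oddResidues hn)ᶜ : Finset (ZMod n)) := by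
  intro u hu v hv _ huv
  have := knodel_castHom_add_of_adj hn huv
  simp only [oddResidues, coe_compl, coe_filter, mem_univ, true_and, Set.mem_compl_iff,
    Set.mem_ofPred_eq] at hu hv
  revert this hu hv
  generalize ZMod.castHom hn (ZMod 2) u = a
  generalize ZMod.castHom hn (ZMod 2) v = b
  revert a b
  decide

end Knodel

/-- If `a + b ≤ 2j + 1`, one of `a, b` is at most `j`, and then the hypothesis in which it
multiplies `k` fails. -/
theorem two_mul_add_one_lt_add {a b j k : ℕ} (ha : j * (k + 1) + 2 ≤ a + b * k)
    (hb : j * (k + 1) + 2 ≤ b + a * k) : 2 * j + 1 < a + b := by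
  by_contra! h
  obtain _ | k := k
  · omega
  by_cases hbj : b ≤ j
  · nlinarith [Nat.mul_le_mul_right k hbj]
  · nlinarith [Nat.mul_le_mul_right k (by omega : a ≤ j)]

theorem knodel_two_mul_add_one_lt_card {n j : ℕ} [NeZero n] (hn : 2 ∣ n) {D : Finset (ZMod n)}
    (hD : (knodel n).IsDominatingSet D) (hj : j * (Nat.log 2 n + 1) + 2 ≤ n / 2) :
    2 * j + 1 < #D := by
  classical
  have hodd := hD.card_le (knodel_isIndepSet_oddResidues hn) knodel_degree_le
  have heven := hD.card_le (knodel_isIndepSet_compl_oddResidues hn) knodel_degree_le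
  rw [card_compl, card_oddResidues, ZMod.card, ← sdiff_eq_inter_compl, sdiff_compl,
    inf_eq_inter] at heven
  rw [card_oddResidues] at hodd
  rw [← card_inter_add_card_sdiff D (oddResidues hn)]
  exact two_mul_add_one_lt_add (hj.trans hodd) (hj.trans (by omega))

theorem stmt_10_general (n j r : ℕ) [NeZero n] (hne : Even n)
    (hn : n = 2 * j * (Nat.log 2 n + 1) + r) (hr4 : 4 ≤ r) (hrk : r < Nat.log 2 n + 1) :
    2 * j + 1 < dominationNumber (knodel n) ∧
    2 * j + 1 = (n + Nat.log 2 n) / (Nat.log 2 n + 1) := by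
  set k := Nat.log 2 n
  have hn' : n = 2 * (j * (k + 1)) + r := by rw [hn]; ring
  refine ⟨SimpleGraph.lt_dominationNumber fun D hD =>
    knodel_two_mul_add_one_lt_card hne.two_dvd hD (by omega : j * (k + 1) + 2 ≤ n / 2), ?_⟩
  refine (Nat.div_eq_of_lt_le ?_ ?_).symm <;> rw [hn'] <;> nlinarith

theorem stmt_10 (n j r : ℕ) [NeZero n] (hn6 : 6 ≤ n) (hne : Even n)
    (hn : n = 2 * j * (Nat.log 2 n + 1) + r) (hr4 : 4 ≤ r) (hrk : r < Nat.log 2 n + 1) :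
    2 * j + 1 < dominationNumber (knodel n) ∧
    2 * j + 1 = (n + Nat.log 2 n) / (Nat.log 2 n + 1) :=
  stmt_10_general n j r hne hn hr4 hrk
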